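/- Let (W,S) be a Coxeter system, H its Hecke algebra, J ⊆ H the two-sided ideal generated by the elements Σ_{w ∈ ⟨s,s'⟩} T_w over pairs of non-commuting generators s,s' generating a finite subgroup, and θ: H → TL = H/J the quotient map. If J is spanned as an A-module by the set {C'_w : w ∈ W∖W_c}, then W∖W_c is closed under the Kazhdan–Lusztig preorder ≤_L, hence is a union of left cells. -/

import Mathlib

open CoxeterSystem LaurentPolynomial

/-- The Laurent polynomial ring `A = ℤ[v,v⁻¹]`. -/
abbrev 𝒜 := LaurentPolynomial ℤ

/-- The element `v`. -/
noncomputable def vv : 𝒜 := LaurentPolynomial.T 1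

/-- The subring `A⁻ = ℤ[v⁻¹]` of `A`. -/
noncomputable def Aminus : Subalgebra ℤ 𝒜 := Algebra.adjoin ℤ {LaurentPolynomial.T (-1)}

/-- The Bruhat–Chevalley order, via the subexpression characterization. -/
def CoxeterSystem.bruhatLE {B W : Type*} [Group W] {M : CoxeterMatrix B}
    (cs : CoxeterSystem M W) (x w : W) : Prop :=
  ∃ ω χ : List B, cs.IsReduced ω ∧ cs.wordProd ω = w ∧ χ.Sublist ω ∧ cs.wordProd χ = x

/-- A single commutation move on words: interchange of two adjacent commuting generators. -/
def CommMove {B : Type*} (M : CoxeterMatrix B) (ω ω' : List B) : Prop :=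
  ∃ (l₁ l₂ : List B) (i j : B), M i j = 2 ∧
    ω = l₁ ++ i :: j :: l₂ ∧ ω' = l₁ ++ j :: i :: l₂

/-- `w` is fully commutative: any two reduced words for `w` are related by a sequence of
interchanges of adjacent commuting generators. -/
def CoxeterSystem.IsFullyCommutative {B W : Type*} [Group W] {M : CoxeterMatrix B}
    (cs : CoxeterSystem M W) (w : W) : Prop :=
  ∀ ω ω' : List B, cs.IsReduced ω → cs.IsReduced ω' →
    cs.wordProd ω = w → cs.wordProd ω' = w →
    Relation.ReflTransGen (CommMove M) ω ω'

/-- One step in the Kazhdan–Lusztig left preorder: `x ←_L y` if for some `s ∈ S` with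
`s y > y`, the basis element `C'_x` occurs with nonzero coefficient in `C'_s C'_y`.
Here `bC` is the Kazhdan–Lusztig basis `w ↦ C'_w` of the Hecke algebra `H`.
The preorder `x ≤_L w` is `Relation.ReflTransGen (LStep cs bC) x w`. -/
def LStep {B W : Type*} [Group W] {M : CoxeterMatrix B} (cs : CoxeterSystem M W)
    {H : Type*} [Ring H] [Algebra 𝒜 H] (bC : Module.Basis W 𝒜 H) (x y : W) : Prop :=
  ∃ i : B, cs.length y < cs.length (cs.simple i * y) ∧
    bC.repr (bC (cs.simple i) * bC y) x ≠ 0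

/- Proof idea: `J` is a left ideal, so `C'_y ∈ J` gives `C'_s C'_y ∈ J`; as `J` is spanned by the
`C'_w` with `w ∈ S`, its elements have `C'`-coordinates supported on `S`. Hence `x ←_L y` with
`y ∈ S` forces `x ∈ S`. -/

section LeftPreorder

variable {B W : Type*} [Group W] {M : CoxeterMatrix B} {cs : CoxeterSystem M W}
  {H : Type*} [Ring H] [Algebra 𝒜 H] {bC : Module.Basis W 𝒜 H}
  {J : TwoSidedIdeal H} {S : Set W}

theorem LStep.mem_of_mem (hJ : (J : Set H) = Submodule.span 𝒜 (bC '' S)) {x y : W}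
    (hxy : LStep cs bC x y) (hy : y ∈ S) : x ∈ S := by
  obtain ⟨i, -, hne⟩ := hxy
  have hyJ : bC y ∈ J := by
    rw [← SetLike.mem_coe, hJ]
    exact Submodule.subset_span (Set.mem_image_of_mem bC hy)
  have hmem : bC (cs.simple i) * bC y ∈ Submodule.span 𝒜 (bC '' S) := by
    rw [← SetLike.mem_coe, ← hJ]
    exact J.mul_mem_left _ _ hyJ
  exact bC.mem_span_image.1 hmem (Finsupp.mem_support_iff.2 hne)

theorem mem_of_reflTransGen_LStep (hJ : (J : Set H) = Submodule.span 𝒜 (bC '' S)) {x w : W}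
    (hxw : Relation.ReflTransGen (LStep cs bC) x w) (hw : w ∈ S) : x ∈ S := by
  induction hxw with
  | refl => exact hw
  | tail _ hstep ih => exact ih (hstep.mem_of_mem hJ hw)

end LeftPreorder

theorem nonFC_closed_leL_of_J_spanned_by_nonFC_KL_general
    {B W : Type*} [Group W] {M : CoxeterMatrix B} (cs : CoxeterSystem M W)
    {H : Type*} [Ring H] [Algebra 𝒜 H]
    (bC : Module.Basis W 𝒜 H)
    (J : TwoSidedIdeal H)
    (hspan : (J : Set H) =
      ↑(Submodule.span 𝒜 {h : H | ∃ w : W, ¬ cs.IsFullyCommutative w ∧ h = bC w})) :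
    ∀ x w : W, Relation.ReflTransGen (LStep cs bC) x w →
      ¬ cs.IsFullyCommutative w → ¬ cs.IsFullyCommutative x := by
  have hJ : (J : Set H) = Submodule.span 𝒜 (bC '' {w | ¬ cs.IsFullyCommutative w}) := by
    rw [hspan]
    congr! 2
    ext h
    simp only [Set.mem_ofPred_eq, Set.mem_image, eq_comm]
  intro x w hxw hw
  exact mem_of_reflTransGen_LStep hJ hxw hw

/-- Let `J ⊆ H` be the two-sided ideal generated by the elements
`Σ_{w ∈ ⟨s,s'⟩} T_w` (where `T_w = v^{ℓ(w)} T̃_w`), over pairs of non-commuting generators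
`s ≠ s'` generating a finite (dihedral) subgroup.  If `J` is spanned as an `A`-module by
`{C'_w : w ∈ W ∖ W_c}`, then `W ∖ W_c` is closed under the Kazhdan–Lusztig preorder `≤_L`,
hence is a union of left cells.  Here `bC` is the Kazhdan–Lusztig basis of `H`. -/
theorem nonFC_closed_leL_of_J_spanned_by_nonFC_KL
    {B W : Type*} [Group W] {M : CoxeterMatrix B} (cs : CoxeterSystem M W)
    {H : Type*} [Ring H] [Algebra 𝒜 H]
    (Tt : W → H) (bT : Module.Basis W 𝒜 H) (hbT : ∀ w, bT w = Tt w)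
    (hmul : ∀ (i : B) (w : W),
      Tt (cs.simple i) * Tt w =
        if cs.length w < cs.length (cs.simple i * w) then Tt (cs.simple i * w)
        else Tt (cs.simple i * w) + (vv - LaurentPolynomial.invert vv) • Tt w)
    (bar : H →+ H)
    (hbar_smul : ∀ (a : 𝒜) (h : H), bar (a • h) = (LaurentPolynomial.invert a) • bar h)
    (hbar_mul : ∀ x y : H, bar (x * y) = bar x * bar y)
    (bC : Module.Basis W 𝒜 H)
    (hC_bar : ∀ w, bar (bC w) = bC w)
    (hC_diag : ∀ w, bT.repr (bC w) w = 1)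
    (hC_supp : ∀ x w, ¬ cs.bruhatLE x w → bT.repr (bC w) x = 0)
    (hC_deg : ∀ x w, x ≠ w → cs.bruhatLE x w →
      bT.repr (bC w) x ∈ Aminus ∧ vv * bT.repr (bC w) x ∈ Aminus)
    (J : TwoSidedIdeal H)
    (hJ : J = TwoSidedIdeal.span
      { h : H | ∃ i j : B, i ≠ j ∧ M i j ≠ 2 ∧ M i j ≠ 0 ∧
        h = ∑ᶠ w ∈ (↑(Subgroup.closure {cs.simple i, cs.simple j}) : Set W),
          (vv ^ cs.length w) • Tt w })
    (hspan : (J : Set H) =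
      ↑(Submodule.span 𝒜 {h : H | ∃ w : W, ¬ cs.IsFullyCommutative w ∧ h = bC w})) :
    ∀ x w : W, Relation.ReflTransGen (LStep cs bC) x w →
      ¬ cs.IsFullyCommutative w → ¬ cs.IsFullyCommutative x :=
  nonFC_closed_leL_of_J_spanned_by_nonFC_KL_general cs bC J hspan
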